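/- arXiv:1303.3099 — 4 statements merged into one kernel-verified Lean document; each statement's English description precedes it below -/
import Mathlib

section
/- For every irrational α ∈ (0,1) there exists a strictly increasing sequence of indices (k_n)_{n≥1}, all of the same parity, such that the denominators q_{k_n} of the convergents of α satisfy q_1 q_{k_1} ≥ 9, q_{k_{n+1}} ≥ 5 q_{k_n}, q_{n+1} q_{k_{n+1}} ≥ 5 q_n q_{k_n}, and (log q_n q_{k_n})/n → ∞. -/
open Filter

/-- For every irrational `α ∈ (0,1)` there is a strictly increasing
sequence of indices `(kₙ)` (indexed from `1`), all of the same parity, such that the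
convergent denominators `q_{kₙ}` of `α` satisfy `q₁ q_{k₁} ≥ 9`,
`q_{k_{n+1}} ≥ 5 q_{kₙ}`, `q_{n+1} q_{k_{n+1}} ≥ 5 qₙ q_{kₙ}`, and
`(log (qₙ q_{kₙ}))/n → ∞`. -/
theorem exists_good_subsequence_of_denominators
    (α : ℝ) (hα : Irrational α) (h0 : 0 < α) (h1 : α < 1)
    (q : ℕ → ℝ) (hq : ∀ n, q n = (GenContFract.of α).dens n) :
    ∃ k : ℕ → ℕ, StrictMono k ∧
      (∀ m n, k m % 2 = k n % 2) ∧
      9 ≤ q 1 * q (k 1) ∧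
      (∀ n ≥ 1, 5 * q (k n) ≤ q (k (n + 1))) ∧
      (∀ n ≥ 1, 5 * (q n * q (k n)) ≤ q (n + 1) * q (k (n + 1))) ∧
      Tendsto (fun n : ℕ => Real.log (q n * q (k n)) / n) atTop atTop := by
  -- The continued fraction of an irrational number never terminates.
  have hnt : ∀ n, ¬ (GenContFract.of α).TerminatedAt n := by
    intro n hn
    obtain ⟨r, hr⟩ := (GenContFract.terminates_iff_rat α).mp ⟨n, hn⟩
    exact hα ⟨r, hr.symm⟩
  have hsome : ∀ n, ∃ gp, (GenContFract.of α).s.get? n = some gp := by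
    intro n
    cases h : (GenContFract.of α).s.get? n with
    | none => exact absurd h (hnt n)
    | some gp => exact ⟨gp, rfl⟩
  -- basic bounds on denominators
  have hfib : ∀ n, (Nat.fib (n + 1) : ℝ) ≤ q n := by
    intro n
    rw [hq]
    apply GenContFract.succ_nth_fib_le_of_nth_den
    cases n with
    | zero => exact Or.inl rfl
    | succ m => exact Or.inr (hnt m)
  have hpos : ∀ n, (1 : ℝ) ≤ q n := by
    intro n
    refine le_trans ?_ (hfib n)
    exact_mod_cast Nat.one_le_iff_ne_zero.mpr (Nat.fib_pos.mpr n.succ_pos).ne'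
  have hmono : Monotone q := by
    apply monotone_nat_of_le_succ
    intro n
    rw [hq, hq]
    exact GenContFract.of_den_mono
  -- recurrence : q (n+2) ≥ q (n+1) + q n
  have hrec : ∀ n, q n + q (n + 1) ≤ q (n + 2) := by
    intro n
    obtain ⟨gp, hs⟩ := hsome (n + 1)
    have hb : 1 ≤ gp.b :=
      GenContFract.of_one_le_get?_partDen (GenContFract.partDen_eq_s_b hs)
    have ha : gp.a = 1 :=
      GenContFract.of_partNum_eq_one (GenContFract.partNum_eq_s_a hs)
    have h2 : (GenContFract.of α).dens (n + 2) = gp.b * q (n + 1) + gp.a * q n :=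
      GenContFract.dens_recurrence hs (hq n).symm (hq (n + 1)).symm
    rw [ha, one_mul] at h2
    rw [hq (n + 2), h2]
    nlinarith [hpos (n + 1)]
  have h4 : ∀ n, 5 * q n ≤ q (n + 4) := by
    intro n
    have r0 := hrec n
    have r1 := hrec (n + 1)
    have r2 := hrec (n + 2)
    have m0 : q n ≤ q (n + 1) := hmono (Nat.le_succ n)
    have e1 : n + 1 + 1 = n + 2 := rfl
    have e2 : n + 2 + 1 = n + 3 := rfl
    have e3 : n + 2 + 2 = n + 4 := rfl
    rw [e1, e2] at r1
    rw [e2, e3] at r2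
    linarith
  have hpow : ∀ m, (5 : ℝ) ^ m ≤ q (4 * m) := by
    intro m
    induction m with
    | zero =>
      simpa using hpos 0
    | succ m ih =>
      have h5 := h4 (4 * m)
      have e : 4 * m + 4 = 4 * (m + 1) := by ring
      rw [e] at h5
      have hp : (0 : ℝ) ≤ (5 : ℝ) ^ m := by positivity
      calc (5 : ℝ) ^ (m + 1) = 5 * 5 ^ m := by ring
        _ ≤ 5 * q (4 * m) := by linarith
        _ ≤ q (4 * (m + 1)) := h5
  refine ⟨fun n => 4 * (n + 1) ^ 2, ?_, ?_, ?_, ?_, ?_, ?_⟩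
  · -- strict monotonicity
    apply strictMono_nat_of_lt_succ
    intro n
    show 4 * (n + 1) ^ 2 < 4 * (n + 1 + 1) ^ 2
    have h := Nat.pow_lt_pow_left ((by omega : n + 1 < n + 1 + 1)) two_ne_zero
    omega
  · -- all indices even
    intro m n
    show 4 * (m + 1) ^ 2 % 2 = 4 * (n + 1) ^ 2 % 2
    simp [Nat.mul_mod]
  · -- q 1 * q 16 ≥ 9
    have h625 := hpow 4
    norm_num at h625 ⊢
    nlinarith [hpos 1, hpos 16]
  · -- 5 * q (k n) ≤ q (k (n+1))
    intro n _
    show 5 * q (4 * (n + 1) ^ 2) ≤ q (4 * (n + 1 + 1) ^ 2)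
    have h5 := h4 (4 * (n + 1) ^ 2)
    refine h5.trans (hmono ?_)
    nlinarith
  · -- product growth
    intro n hn
    show 5 * (q n * q (4 * (n + 1) ^ 2)) ≤ q (n + 1) * q (4 * (n + 1 + 1) ^ 2)
    have h5 : 5 * q (4 * (n + 1) ^ 2) ≤ q (4 * (n + 1 + 1) ^ 2) := by
      have h5' := h4 (4 * (n + 1) ^ 2)
      refine h5'.trans (hmono ?_)
      nlinarith
    have hq0 : (0 : ℝ) ≤ q n := le_trans zero_le_one (hpos n)
    have hq1 : (0 : ℝ) ≤ q (4 * (n + 1 + 1) ^ 2) :=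
      le_trans zero_le_one (hpos _)
    calc 5 * (q n * q (4 * (n + 1) ^ 2)) = q n * (5 * q (4 * (n + 1) ^ 2)) := by ring
      _ ≤ q n * q (4 * (n + 1 + 1) ^ 2) := mul_le_mul_of_nonneg_left h5 hq0
      _ ≤ q (n + 1) * q (4 * (n + 1 + 1) ^ 2) :=
          mul_le_mul_of_nonneg_right (hmono (Nat.le_succ n)) hq1
  · -- divergence of log
    have hlog5 : (0 : ℝ) < Real.log 5 := Real.log_pos (by norm_num)
    have hbound : ∀ n : ℕ, 1 ≤ n →
        (n : ℝ) * Real.log 5 ≤ Real.log (q n * q (4 * (n + 1) ^ 2)) / n := by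
      intro n hn
      have hnpos : (0 : ℝ) < n := by exact_mod_cast hn
      have hqk : (5 : ℝ) ^ ((n + 1) ^ 2) ≤ q (4 * (n + 1) ^ 2) := hpow ((n + 1) ^ 2)
      have hprod : (5 : ℝ) ^ ((n + 1) ^ 2) ≤ q n * q (4 * (n + 1) ^ 2) := by
        calc (5 : ℝ) ^ ((n + 1) ^ 2) = 1 * 5 ^ ((n + 1) ^ 2) := by ring
          _ ≤ q n * q (4 * (n + 1) ^ 2) :=
            mul_le_mul (hpos n) hqk (by positivity) (le_trans zero_le_one (hpos n))
      have hlog : (((n + 1) ^ 2 : ℕ) : ℝ) * Real.log 5 ≤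
          Real.log (q n * q (4 * (n + 1) ^ 2)) := by
        have := Real.log_le_log (by positivity) hprod
        rwa [Real.log_pow] at this
      rw [le_div_iff₀ hnpos]
      have hcast : (((n + 1) ^ 2 : ℕ) : ℝ) = ((n : ℝ) + 1) ^ 2 := by push_cast; ring
      rw [hcast] at hlog
      nlinarith [hlog5.le]
    refine tendsto_atTop_mono' atTop ?_
      (Tendsto.atTop_mul_const hlog5 tendsto_natCast_atTop_atTop)
    filter_upwards [eventually_ge_atTop 1] with n hn
    exact hbound n hn
end

section
/- Let T be a uniquely ergodic homeomorphism of a compact metric space X with invariant measure μ. For each ε > 0, the set N_ε of continuous functions f: X → ℝ with ∫ f dμ = 0 such that the cylinder T_f has a point p ∈ X × ℝ whose forward orbit stays at distance ≥ ε from p (i.e., |p − T_f^k(p)| ≥ ε for all k > 0) is closed in the uniform topology. -/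
open MeasureTheory

/-- Continuity of integration against a finite measure, as a map on `C(X, ℝ)`. -/
lemma integral_continuous_aux {X : Type*} [MetricSpace X] [CompactSpace X]
    [MeasurableSpace X] [BorelSpace X] (μ : Measure X) [IsProbabilityMeasure μ] :
    Continuous fun f : C(X, ℝ) => ∫ x, f x ∂μ := by
  have hint : ∀ f : C(X, ℝ), Integrable (fun x => f x) μ := fun f =>
    f.continuous.integrable_of_hasCompactSupport (HasCompactSupport.of_compactSpace _)
  refine LipschitzWith.continuous (K := 1) (lipschitzWith_iff_dist_le_mul.mpr fun f g => ?_)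
  rw [NNReal.coe_one, one_mul, dist_eq_norm, ← integral_sub (hint f) (hint g)]
  calc ‖∫ x, (f x - g x) ∂μ‖ ≤ dist f g * (μ Set.univ).toReal := by
        refine norm_integral_le_of_norm_le_const ?_
        filter_upwards with x
        rw [← dist_eq_norm]
        exact ContinuousMap.dist_apply_le_dist x
    _ = dist f g := by simp

/-- Let `T` be a uniquely ergodic homeomorphism of a compact metric
space `X` with invariant measure `μ`. For each `ε > 0`, the set `N_ε` of continuous
`f : X → ℝ` with `∫ f dμ = 0` such that the cylinder `T_f` has a point `p ∈ X × ℝ`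
whose forward orbit stays (in the taxicab metric) at distance `≥ ε` from `p` is closed
in the uniform topology on `C(X, ℝ)`. -/
theorem nonreturning_cocycles_closed
    {X : Type*} [MetricSpace X] [CompactSpace X] [MeasurableSpace X] [BorelSpace X]
    (T : Equiv.Perm X) (hT : Continuous T) (hT' : Continuous T.symm)
    (μ : Measure X) [IsProbabilityMeasure μ]
    (hinv : MeasurePreserving T μ μ)
    (huniq : ∀ ν : Measure X, IsProbabilityMeasure ν → MeasurePreserving T ν ν → ν = μ)
    (cyl : C(X, ℝ) → (X × ℝ → X × ℝ))
    (hcyl : ∀ (f : C(X, ℝ)) (p : X × ℝ), cyl f p = (T p.1, p.2 + f p.1))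
    (ε : ℝ) (hε : 0 < ε) :
    IsClosed {f : C(X, ℝ) | ∫ x, f x ∂μ = 0 ∧
      ∃ p : X × ℝ, ∀ k : ℕ, 0 < k →
        ε ≤ dist p.1 ((cyl f)^[k] p).1 + dist p.2 ((cyl f)^[k] p).2} := by
  -- Explicit formula for the iterates of the cylinder map.
  have hiter : ∀ (f : C(X, ℝ)) (k : ℕ) (p : X × ℝ),
      (cyl f)^[k] p = ((⇑T)^[k] p.1, p.2 + ∑ i ∈ Finset.range k, f ((⇑T)^[i] p.1)) := by
    intro f k p
    induction k with
    | zero => simp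
    | succ n ih =>
      rw [Function.iterate_succ_apply', ih, hcyl, Function.iterate_succ_apply',
        Finset.sum_range_succ]
      simp [add_assoc]
  -- Rewrite the set in terms of Birkhoff sums, with a point in `X` only.
  have hset : {f : C(X, ℝ) | ∫ x, f x ∂μ = 0 ∧
      ∃ p : X × ℝ, ∀ k : ℕ, 0 < k →
        ε ≤ dist p.1 ((cyl f)^[k] p).1 + dist p.2 ((cyl f)^[k] p).2}
      = {f : C(X, ℝ) | ∫ x, f x ∂μ = 0} ∩
        Prod.fst '' {q : C(X, ℝ) × X | ∀ k : ℕ, 0 < k →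
          ε ≤ dist q.2 ((⇑T)^[k] q.2) + |∑ i ∈ Finset.range k, q.1 ((⇑T)^[i] q.2)|} := by
    ext f
    have key : ∀ (f : C(X, ℝ)) (k : ℕ) (p : X × ℝ),
        dist p.1 ((cyl f)^[k] p).1 + dist p.2 ((cyl f)^[k] p).2
          = dist p.1 ((⇑T)^[k] p.1) + |∑ i ∈ Finset.range k, f ((⇑T)^[i] p.1)| := by
      intro f k p
      rw [hiter]
      simp [Real.dist_eq, abs_sub_comm]
    constructor
    · rintro ⟨hintf, p, hp⟩
      refine ⟨hintf, ⟨(f, p.1), fun k hk => ?_, rfl⟩⟩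
      have := hp k hk
      rwa [key] at this
    · rintro ⟨hintf, ⟨q, hq, rfl⟩⟩
      refine ⟨hintf, ⟨(q.2, 0), fun k hk => ?_⟩⟩
      rw [key]
      exact hq k hk
  rw [hset]
  refine IsClosed.inter (isClosed_eq (integral_continuous_aux μ) continuous_const) ?_
  refine isClosedMap_fst_of_compactSpace _ ?_
  have : {q : C(X, ℝ) × X | ∀ k : ℕ, 0 < k →
      ε ≤ dist q.2 ((⇑T)^[k] q.2) + |∑ i ∈ Finset.range k, q.1 ((⇑T)^[i] q.2)|}
      = ⋂ k : ℕ, {q : C(X, ℝ) × X | 0 < k →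
        ε ≤ dist q.2 ((⇑T)^[k] q.2) + |∑ i ∈ Finset.range k, q.1 ((⇑T)^[i] q.2)|} := by
    ext q; simp [Set.mem_iInter]
  rw [this]
  refine isClosed_iInter fun k => ?_
  by_cases hk : 0 < k
  · have : {q : C(X, ℝ) × X | 0 < k →
        ε ≤ dist q.2 ((⇑T)^[k] q.2) + |∑ i ∈ Finset.range k, q.1 ((⇑T)^[i] q.2)|}
        = {q : C(X, ℝ) × X |
          ε ≤ dist q.2 ((⇑T)^[k] q.2) + |∑ i ∈ Finset.range k, q.1 ((⇑T)^[i] q.2)|} := by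
      ext q; simp [hk]
    rw [this]
    refine isClosed_le continuous_const (Continuous.add ?_ ?_)
    · exact (continuous_snd.dist ((hT.iterate k).comp continuous_snd))
    · refine (Continuous.abs ?_)
      refine continuous_finset_sum _ fun i _ => ?_
      exact continuous_eval.comp (continuous_fst.prodMk ((hT.iterate i).comp continuous_snd))
  · have : {q : C(X, ℝ) × X | 0 < k →
        ε ≤ dist q.2 ((⇑T)^[k] q.2) + |∑ i ∈ Finset.range k, q.1 ((⇑T)^[i] q.2)|}
        = Set.univ := by
      ext q; simp [hk]
    rw [this]
    exact isClosed_univ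
end

section
/- Let f_n: [0,1) → ℝ (viewed on the circle ℝ/ℤ) be the 1/(A_n q_n)-periodic continuous even function that is 0 on [0, 1/(12 A_n q_n)], affine with slope L_n on [1/(12 A_n q_n), 5/(12 A_n q_n)], and constant q_{k_n}/(3 A_n n²) on [5/(12 A_n q_n), 1/(2 A_n q_n)], where L_n = q_n q_{k_n}/n². Then f_n is L_n-Lipschitz and for every x, |f_n(x+α) − f_n(x)| < 1/n². -/
/-- The `1/(AQ)`-periodic even continuous function `fₙ` which is `0`
on `[0, 1/(12AQ)]`, affine with slope `L = qₙ Q / n²` on `[1/(12AQ), 5/(12AQ)]` and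
constant `Q/(3An²)` on `[5/(12AQ), 1/(2AQ)]` (here `Q = q_{kₙ}`, `A = Aₙ`) is
`L`-Lipschitz and satisfies `|fₙ(x+α) − fₙ(x)| < 1/n²` for all `x`. -/
theorem piecewise_cocycle_lipschitz_and_small_coboundary
    (α : ℝ) (hα : Irrational α)
    (n qn Q A : ℕ) (hn : 1 ≤ n) (hqn : 0 < qn) (hQ : 0 < Q) (hApos : 0 < A)
    (hAQ : A ≤ Q)
    (pk : ℤ) (happrox : |α - (pk : ℝ) / Q| < 1 / (qn * Q))
    (L : ℝ) (hL : L = qn * Q / n ^ 2)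
    (fn : ℝ → ℝ) (hcont : Continuous fn)
    (hper : ∀ x, fn (x + 1 / (A * Q)) = fn x)
    (heven : ∀ x, fn (-x) = fn x)
    (hzero : ∀ x ∈ Set.Icc (0 : ℝ) (1 / (12 * A * Q)), fn x = 0)
    (haffine : ∀ x ∈ Set.Icc (1 / (12 * A * Q) : ℝ) (5 / (12 * A * Q)),
      fn x = L * (x - 1 / (12 * A * Q)))
    (hconst : ∀ x ∈ Set.Icc (5 / (12 * A * Q) : ℝ) (1 / (2 * A * Q)),
      fn x = Q / (3 * A * n ^ 2)) :
    (∀ x y : ℝ, |fn x - fn y| ≤ L * |x - y|) ∧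
    (∀ x : ℝ, |fn (x + α) - fn x| < 1 / n ^ 2) := by
  have hA0 : (0:ℝ) < A := by exact_mod_cast hApos
  have hQ0 : (0:ℝ) < Q := by exact_mod_cast hQ
  have hq0 : (0:ℝ) < qn := by exact_mod_cast hqn
  have hn0 : (0:ℝ) < n := by exact_mod_cast hn
  set a : ℝ := 1 / (12 * (A:ℝ) * Q) with ha
  set b : ℝ := 5 / (12 * (A:ℝ) * Q) with hb
  set h : ℝ := 1 / (2 * (A:ℝ) * Q) with hh
  set P : ℝ := 1 / ((A:ℝ) * Q) with hPdef
  have hAQ0 : (0:ℝ) < (A:ℝ) * Q := by positivity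
  have hAQ0' : ((A:ℝ) * Q) ≠ 0 := ne_of_gt hAQ0
  have hP0 : 0 < P := by rw [hPdef]; positivity
  have hP0' : P ≠ 0 := ne_of_gt hP0
  have ha0 : 0 < a := by rw [ha]; positivity
  have hab : a < b := by
    rw [ha, hb]; exact (div_lt_div_iff_of_pos_right (by positivity)).mpr (by norm_num)
  have hab' : a < b := hab
  have hbh : b < h := by
    have h6 : h = 6 / (12 * (A:ℝ) * Q) := by rw [hh]; ring
    rw [hb, h6]; exact (div_lt_div_iff_of_pos_right (by positivity)).mpr (by norm_num)
  have hhP : h = P / 2 := by rw [hh, hPdef]; ring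
  have hL0 : 0 < L := by rw [hL]; positivity
  -- consistency of the two descriptions at `b`
  have hC : ((Q:ℝ)) / (3 * A * n ^ 2) = L * (b - a) := by
    rw [← hconst b ⟨le_refl b, hbh.le⟩, haffine b ⟨hab.le, le_refl b⟩]
  -- closed form of fn on [0,h]
  have hval : ∀ u : ℝ, 0 ≤ u → u ≤ h → fn u = L * (min (max u a) b - a) := by
    intro u hu0 huh
    rcases le_total u a with hua | hau
    · rw [hzero u ⟨hu0, hua⟩, max_eq_right hua, min_eq_left hab.le]; ring
    · rcases le_total u b with hub | hbu
      · rw [haffine u ⟨hau, hub⟩, max_eq_left hau, min_eq_left hub]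
      · rw [hconst u ⟨hbu, huh⟩, hC, max_eq_left (hab.le.trans hbu), min_eq_right hbu]
  -- the clamp function is 1-Lipschitz
  have clamp : ∀ x y : ℝ, |min (max x a) b - min (max y a) b| ≤ |x - y| := by
    intro x y
    have h1 := abs_min_sub_min_le_max (max x a) b (max y a) b
    have h2 := abs_max_sub_max_le_abs x y a
    exact h1.trans (max_le h2 (by rw [sub_self, abs_zero]; exact abs_nonneg _))
  -- range bounds
  have hrange : ∀ u : ℝ, 0 ≤ u → u ≤ h → 0 ≤ fn u ∧ fn u ≤ L * (b - a) := by
    intro u hu0 huh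
    rw [hval u hu0 huh]
    have h1 : a ≤ min (max u a) b := le_min (le_max_right _ _) hab.le
    have h2 : min (max u a) b ≤ b := min_le_right _ _
    constructor
    · nlinarith
    · nlinarith
  -- periodicity for integer multiples
  have hperP : Function.Periodic fn P := hper
  have hperM : ∀ (m : ℤ) (x : ℝ), fn (x + m * P) = fn x := fun m x => (hperP.int_mul m) x
  -- distance to the lattice P·ℤ
  set D : ℝ → ℝ := fun x => |x - round (x / P) * P| with hD
  have hD0 : ∀ x, 0 ≤ D x := fun x => abs_nonneg _
  have hDfn : ∀ x, fn (D x) = fn x := by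
    intro x
    have key : fn (x - round (x / P) * P) = fn x := by
      have h2 := hperM (round (x / P)) (x - round (x / P) * P)
      rw [sub_add_cancel] at h2
      exact h2.symm
    rcases abs_cases (x - round (x / P) * P) with ⟨he, _⟩ | ⟨he, _⟩
    · simp only [hD]; rw [he]; exact key
    · simp only [hD]; rw [he, heven]; exact key
  have hDh : ∀ x, D x ≤ h := by
    intro x
    have h1 : |x / P - round (x / P)| ≤ 1 / 2 := abs_sub_round _
    have e1 : x - round (x / P) * P = (x / P - round (x / P)) * P := by
      rw [sub_mul, div_mul_cancel₀ x hP0']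
    have : D x = |x / P - round (x / P)| * P := by
      simp only [hD]; rw [e1, abs_mul, abs_of_pos hP0]
    rw [this, hhP]
    nlinarith
  have hDkey : ∀ x y : ℝ, D x ≤ |x - y| + D y := by
    intro x y
    have hmin : D x ≤ |x - round (y / P) * P| := by
      have e1 : x - round (x / P) * P = (x / P - round (x / P)) * P := by
        rw [sub_mul, div_mul_cancel₀ x hP0']
      have e2 : x - round (y / P) * P = (x / P - round (y / P)) * P := by
        rw [sub_mul, div_mul_cancel₀ x hP0']
      simp only [hD]
      rw [e1, e2, abs_mul, abs_mul]
      exact mul_le_mul_of_nonneg_right (round_le (x / P) _) (abs_nonneg P)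
    have htri : |x - round (y / P) * P| ≤ |x - y| + D y := by
      simp only [hD]
      calc |x - round (y / P) * P| = |(x - y) + (y - round (y / P) * P)| := by ring_nf
        _ ≤ |x - y| + |y - round (y / P) * P| := abs_add_le _ _
    linarith
  have hDlip : ∀ x y : ℝ, |D x - D y| ≤ |x - y| := by
    intro x y
    rw [abs_sub_le_iff]
    refine ⟨by linarith [hDkey x y], ?_⟩
    have := hDkey y x
    rw [abs_sub_comm y x] at this
    linarith
  -- global Lipschitz bound
  have hlip : ∀ x y : ℝ, |fn x - fn y| ≤ L * |x - y| := by
    intro x y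
    rcases le_total |x - y| h with hle | hge
    · rw [← hDfn x, ← hDfn y, hval (D x) (hD0 x) (hDh x), hval (D y) (hD0 y) (hDh y)]
      have e : L * (min (max (D x) a) b - a) - L * (min (max (D y) a) b - a)
          = L * (min (max (D x) a) b - min (max (D y) a) b) := by ring
      rw [e, abs_mul, abs_of_pos hL0]
      exact mul_le_mul_of_nonneg_left ((clamp _ _).trans (hDlip x y)) hL0.le
    · have r1 := hrange (D x) (hD0 x) (hDh x)
      have r2 := hrange (D y) (hD0 y) (hDh y)
      rw [hDfn x] at r1; rw [hDfn y] at r2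
      have hba : b - a ≤ h := by linarith
      have step1 : |fn x - fn y| ≤ L * (b - a) := by
        rw [abs_le]; constructor <;> linarith [r1.1, r1.2, r2.1, r2.2]
      calc |fn x - fn y| ≤ L * (b - a) := step1
        _ ≤ L * h := mul_le_mul_of_nonneg_left hba hL0.le
        _ ≤ L * |x - y| := mul_le_mul_of_nonneg_left hge hL0.le
  refine ⟨hlip, fun x => ?_⟩
  have hpk : fn (x + (pk : ℝ) / Q) = fn x := by
    have e : ((pk : ℝ)) / Q = ((pk * A : ℤ) : ℝ) * P := by
      push_cast; rw [hPdef]; field_simp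
    rw [e]; exact hperM _ x
  calc |fn (x + α) - fn x| = |fn (x + α) - fn (x + (pk : ℝ) / Q)| := by rw [hpk]
    _ ≤ L * |(x + α) - (x + (pk : ℝ) / Q)| := hlip _ _
    _ = L * |α - (pk : ℝ) / Q| := by
        rw [show (x + α) - (x + (pk : ℝ) / Q) = α - (pk : ℝ) / Q by ring]
    _ < L * (1 / (qn * Q)) := by
        exact mul_lt_mul_of_pos_left happrox hL0
    _ = 1 / n ^ 2 := by rw [hL]; field_simp
end

section
/- Let X be an infinite, boundedly compact metric space without isolated points, and T: X → X a homeomorphism that is transitive and such that the set of nonperiodic points with closed discrete orbits is dense. Then T is maximally sensitive: for every ε > 0, every x ∈ X and every δ > 0 there exist n > 0 and y with d(x,y) < δ and d(T^n x, T^n y) > ε. -/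
/-!
Suppose `T` were not sensitive at `x` for some `ε, δ`: every `y` with `d(x, y) < δ` satisfies
`d(Tⁿx, Tⁿy) ≤ ε` for all `n > 0`. Near `x` there is a nonperiodic point with closed discrete
orbit; in a proper space such an orbit leaves every ball, so it drags `Tⁿx` away from `x` as
`n → ∞`. On the other hand, a point with dense orbit visits `B(x, δ)` at infinitely many times
(no isolated points), hence at two times `a < b` with `b - a` arbitrarily large, and the visit
at time `a` shadows `x` for `b - a` steps, bringing `T^(b-a) x` back to within `ε + δ` of `x`.
-/

open Filter Topology Set

theorem Equiv.Perm.injective_zpow_apply {α : Type*} {T : Equiv.Perm α} {y : α}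
    (hy : ∀ n : ℤ, n ≠ 0 → (T ^ n) y ≠ y) :
    Function.Injective fun n : ℤ => (T ^ n) y := by
  intro a b hab
  by_contra hne
  apply hy (a - b) (sub_ne_zero.mpr hne)
  calc (T ^ (a - b)) y = (T ^ (-b)) ((T ^ a) y) := by
        rw [← Equiv.Perm.mul_apply, ← zpow_add, neg_add_eq_sub]
    _ = y := by
        simp only [hab, ← Equiv.Perm.mul_apply, ← zpow_add, neg_add_cancel, zpow_zero,
          Equiv.Perm.one_apply]

theorem Function.Injective.tendsto_cofinite_cocompact {ι X : Type*} [TopologicalSpace X]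
    {f : ι → X} (hf : Function.Injective f) (hclosed : IsClosed (range f))
    (hdiscrete : IsDiscrete (range f)) : Tendsto f cofinite (cocompact X) :=
  (hclosed.tendsto_coe_cofinite_of_isDiscrete hdiscrete).comp
    (rangeFactorization_injective.mpr hf).tendsto_cofinite

theorem Dense.infinite_preimage_isOpen {ι X : Type*} [TopologicalSpace X] [T1Space X]
    [∀ x : X, NeBot (𝓝[≠] x)] {f : ι → X} (hf : Dense (range f)) {U : Set X}
    (hU : IsOpen U) (hne : U.Nonempty) : (f ⁻¹' U).Infinite := by
  intro hfin
  obtain ⟨_, ⟨⟨m, rfl⟩, hm⟩, hmU⟩ :=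
    (hf.sdiff_finite (hfin.image f)).exists_mem_open hU hne
  exact hm ⟨m, hmU, rfl⟩

theorem Set.Infinite.exists_lt_sub {S : Set ℤ} (hS : S.Infinite) (N : ℤ) :
    ∃ a ∈ S, ∃ b ∈ S, N < b - a := by
  by_contra! h
  obtain ⟨a, ha⟩ := hS.nonempty
  exact hS (BddBelow.finite_of_bddAbove ⟨a - N, fun b hb => by linarith [h b hb a ha]⟩
    ⟨a + N, fun b hb => by linarith [h a ha b hb]⟩)

section Shadowing

variable {X : Type*} [PseudoMetricSpace X] {T : Equiv.Perm X} {x : X} {ε δ : ℝ}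

theorem tendsto_dist_zpow_apply_of_shadow
    (hstable : ∀ n : ℤ, 0 < n → ∀ y, dist x y < δ → dist ((T ^ n) x) ((T ^ n) y) ≤ ε)
    {y : X} (hy : dist x y < δ)
    (hesc : Tendsto (fun n : ℤ => dist ((T ^ n) y) x) atTop atTop) :
    Tendsto (fun n : ℤ => dist ((T ^ n) x) x) atTop atTop := by
  refine tendsto_atTop_mono' _ ?_ (tendsto_atTop_add_const_right _ (-ε) hesc)
  filter_upwards [eventually_gt_atTop 0] with n hn
  have hshadow := hstable n hn y hy
  have htri := dist_triangle_left ((T ^ n) y) x ((T ^ n) x)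
  linarith

theorem frequently_dist_zpow_apply_le_of_shadow
    (hstable : ∀ n : ℤ, 0 < n → ∀ y, dist x y < δ → dist ((T ^ n) x) ((T ^ n) y) ≤ ε)
    {z : X} (hvisits : ((fun m : ℤ => (T ^ m) z) ⁻¹' Metric.ball x δ).Infinite) :
    ∃ᶠ k : ℤ in atTop, dist ((T ^ k) x) x ≤ ε + δ := by
  rw [frequently_atTop]
  intro N
  obtain ⟨a, ha, b, hb, hab⟩ := hvisits.exists_lt_sub (max N 0)
  replace ha : dist x ((T ^ a) z) < δ := by rw [dist_comm]; exact ha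
  replace hb : dist ((T ^ b) z) x < δ := hb
  have hshift : (T ^ (b - a)) ((T ^ a) z) = (T ^ b) z := by
    rw [← Equiv.Perm.mul_apply, ← zpow_add, sub_add_cancel]
  have hshadow := hstable (b - a) (by omega) _ ha
  rw [hshift] at hshadow
  refine ⟨b - a, by omega, ?_⟩
  linarith [dist_triangle ((T ^ (b - a)) x) ((T ^ b) z) x]

end Shadowing

theorem discrete_chaos_maximal_sensitivity_general
    {X : Type*} [MetricSpace X] [ProperSpace X]
    (hni : ∀ x : X, (nhdsWithin x {x}ᶜ).NeBot)
    (T : Equiv.Perm X)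
    (htrans : ∃ x : X, Dense (Set.range fun n : ℤ => (T ^ n) x))
    (hdense : Dense {y : X |
      (∀ n : ℤ, n ≠ 0 → (T ^ n) y ≠ y) ∧
      IsClosed (Set.range fun n : ℤ => (T ^ n) y) ∧
      DiscreteTopology (Set.range fun n : ℤ => (T ^ n) y)}) :
    ∀ ε > (0 : ℝ), ∀ x : X, ∀ δ > (0 : ℝ), ∃ n : ℕ, 0 < n ∧ ∃ y : X,
      dist x y < δ ∧ ε < dist ((T ^ (n : ℤ)) x) ((T ^ (n : ℤ)) y) := by
  intro ε _ x δ hδ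
  by_contra! hsens
  have hstable : ∀ n : ℤ, 0 < n → ∀ y, dist x y < δ → dist ((T ^ n) x) ((T ^ n) y) ≤ ε := by
    intro n hn
    lift n to ℕ using hn.le
    exact hsens n (by exact_mod_cast hn)
  obtain ⟨y, ⟨hyper, hyclosed, hydiscrete⟩, hxy⟩ := hdense.exists_dist_lt x hδ
  have hesc : Tendsto (fun n : ℤ => dist ((T ^ n) y) x) atTop atTop :=
    (tendsto_dist_right_cocompact_atTop x).comp <|
      ((Equiv.Perm.injective_zpow_apply hyper).tendsto_cofinite_cocompact hyclosed
        (isDiscrete_iff_discreteTopology.mpr hydiscrete)).mono_left atTop_le_cofinite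
  obtain ⟨z, hz⟩ := htrans
  have hvisits : ((fun m : ℤ => (T ^ m) z) ⁻¹' Metric.ball x δ).Infinite :=
    hz.infinite_preimage_isOpen Metric.isOpen_ball (Metric.nonempty_ball.mpr hδ)
  have hxfar := (tendsto_dist_zpow_apply_of_shadow hstable hxy hesc).eventually_gt_atTop (ε + δ)
  obtain ⟨k, hfar, hnear⟩ :=
    (hxfar.and_frequently (frequently_dist_zpow_apply_le_of_shadow hstable hvisits)).exists
  linarith

/-- Let `X` be an infinite, boundedly compact (proper) metric space
without isolated points and `T : X → X` a transitive homeomorphism such that the set of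
nonperiodic points with closed discrete orbits is dense. Then `T` is maximally
sensitive: for every `ε > 0`, `x ∈ X`, `δ > 0` there are `n > 0` and `y` with
`d(x,y) < δ` and `d(Tⁿx, Tⁿy) > ε`. -/
theorem discrete_chaos_maximal_sensitivity
    {X : Type*} [MetricSpace X] [ProperSpace X] [Infinite X]
    (hni : ∀ x : X, (nhdsWithin x {x}ᶜ).NeBot)
    (T : Equiv.Perm X) (hT : Continuous T) (hT' : Continuous T.symm)
    (htrans : ∃ x : X, Dense (Set.range fun n : ℤ => (T ^ n) x))
    (hdense : Dense {y : X |
      (∀ n : ℤ, n ≠ 0 → (T ^ n) y ≠ y) ∧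
      IsClosed (Set.range fun n : ℤ => (T ^ n) y) ∧
      DiscreteTopology (Set.range fun n : ℤ => (T ^ n) y)}) :
    ∀ ε > (0 : ℝ), ∀ x : X, ∀ δ > (0 : ℝ), ∃ n : ℕ, 0 < n ∧ ∃ y : X,
      dist x y < δ ∧ ε < dist ((T ^ (n : ℤ)) x) ((T ^ (n : ℤ)) y) :=
  discrete_chaos_maximal_sensitivity_general hni T htrans hdense
end
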